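/- arXiv:1707.09919 — 2 statements merged into one kernel-verified Lean document; each statement's English description precedes it below -/
import Mathlib

section
/- Let C : ℕ → ℝ be defined by C(1) = 1 and C(N) = ∑_{i=1}^{N-1} C(i)·C(N-i) for N ≥ 2. Then for all s with 0 ≤ s < 1/4, the power series ∑_{i=1}^∞ C(i)·s^i converges and its sum equals 1/2 - √(1/4 - s). -/
/-!
Every sequence satisfying the convolution recursion is the shifted Catalan sequence,
`C (n + 1) = catalan n`. Since `catalan n ≤ 4 ^ n`, the series `F s = ∑ catalan n * s ^ (n + 1)`
converges absolutely for `|s| < 1 / 4`, and the Cauchy product turns the recursion into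
`F s ^ 2 = F s - s`, so `F s = 1 / 2 ± √(1 / 4 - s)`. On `[0, 1 / 4)` the function `F` has
nonnegative coefficients and is monotone, whereas both roots at `t > s` lie below
`1 / 2 + √(1 / 4 - s)`; hence `F` never takes the `+` value.
-/

open Finset

theorem eq_catalan_of_convolution {R : Type*} [Semiring R] (C : ℕ → R) (hC1 : C 1 = 1)
    (hCrec : ∀ N : ℕ, 2 ≤ N → C N = ∑ i ∈ Ico 1 N, C i * C (N - i)) (n : ℕ) :
    C (n + 1) = catalan n := by
  induction n using Nat.strong_induction_on with
  | _ n ih =>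
    match n with
    | 0 => simpa using hC1
    | m + 1 =>
      rw [hCrec (m + 2) (by omega), sum_Ico_eq_sum_range, catalan_succ', Nat.cast_sum,
        Nat.sum_antidiagonal_eq_sum_range_succ (fun i j => ((catalan i * catalan j : ℕ) : R)) m]
      refine sum_congr rfl fun k hk => ?_
      have hkm : k ≤ m := Nat.lt_succ_iff.mp (mem_range.mp hk)
      rw [Nat.cast_mul, ← ih k (by omega), ← ih (m - k) (by omega), add_comm 1 k,
        show m + 2 - (k + 1) = m - k + 1 by omega]

theorem eq_half_sub_sqrt_of_sq_eq_of_monotoneOn {f : ℝ → ℝ} {a s : ℝ}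
    (hf : MonotoneOn f (Set.Ico a (1 / 4))) (hq : ∀ u ∈ Set.Ico a (1 / 4), f u ^ 2 = f u - u)
    (hs : s ∈ Set.Ico a (1 / 4)) : f s = 1 / 2 - √(1 / 4 - s) := by
  have branch : ∀ u ∈ Set.Ico a (1 / 4),
      f u = 1 / 2 - √(1 / 4 - u) ∨ f u = 1 / 2 + √(1 / 4 - u) := by
    intro u hu
    have h : (f u - 1 / 2) ^ 2 = √(1 / 4 - u) ^ 2 := by
      rw [Real.sq_sqrt (by linarith [hu.2])]; linarith [hq u hu]
    rcases sq_eq_sq_iff_eq_or_eq_neg.mp h with h | h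
    · right; linarith
    · left; linarith
  refine (branch s hs).resolve_right fun hplus => ?_
  obtain ⟨has, hs4⟩ := hs
  set t := (s + 1 / 4) / 2 with ht_def
  have hst : s < t := by linarith
  have ht : t ∈ Set.Ico a (1 / 4) := ⟨by linarith, by linarith⟩
  have hft : f s ≤ f t := hf ⟨has, hs4⟩ ht hst.le
  have hsqrt : √(1 / 4 - t) < √(1 / 4 - s) := Real.sqrt_lt_sqrt (by linarith) (by linarith)
  have : f t ≤ 1 / 2 + √(1 / 4 - t) := by
    rcases branch t ht with h | h <;> linarith [Real.sqrt_nonneg (1 / 4 - t)]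
  linarith

theorem Nat.catalan_le_four_pow (n : ℕ) : catalan n ≤ 4 ^ n :=
  calc catalan n ≤ (n + 1) * catalan n := Nat.le_mul_of_pos_left _ n.succ_pos
    _ = n.centralBinom := succ_mul_catalan_eq_centralBinom n
    _ ≤ 4 ^ n := n.centralBinom_le_four_pow

noncomputable def catalanGF (s : ℝ) : ℝ := ∑' n : ℕ, (catalan n : ℝ) * s ^ (n + 1)

theorem summable_norm_catalan_mul_pow {s : ℝ} (hs : |s| < 1 / 4) :
    Summable fun n : ℕ => ‖(catalan n : ℝ) * s ^ (n + 1)‖ := by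
  refine Summable.of_nonneg_of_le (fun n => norm_nonneg _) (fun n => ?_)
    ((summable_geometric_of_lt_one (by positivity) (by linarith : 4 * |s| < 1)).mul_left |s|)
  calc ‖(catalan n : ℝ) * s ^ (n + 1)‖ = catalan n * |s| ^ (n + 1) := by
        rw [norm_mul, Real.norm_natCast, norm_pow, Real.norm_eq_abs]
    _ ≤ 4 ^ n * |s| ^ (n + 1) := by gcongr; exact_mod_cast n.catalan_le_four_pow
    _ = |s| * (4 * |s|) ^ n := by ring

theorem hasSum_catalanGF {s : ℝ} (hs : |s| < 1 / 4) :
    HasSum (fun n : ℕ => (catalan n : ℝ) * s ^ (n + 1)) (catalanGF s) :=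
  (summable_norm_catalan_mul_pow hs).of_norm.hasSum

theorem catalanGF_sq {s : ℝ} (hs : |s| < 1 / 4) : catalanGF s ^ 2 = catalanGF s - s := by
  have hnorm := summable_norm_catalan_mul_pow hs
  have hconv : ∀ n : ℕ, ∑ kl ∈ antidiagonal n,
      (catalan kl.1 : ℝ) * s ^ (kl.1 + 1) * ((catalan kl.2 : ℝ) * s ^ (kl.2 + 1))
      = (catalan (n + 1) : ℝ) * s ^ (n + 1 + 1) := by
    intro n
    rw [catalan_succ', Nat.cast_sum, sum_mul]
    refine sum_congr rfl fun kl hkl => ?_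
    rw [← mem_antidiagonal.mp hkl]
    push_cast
    ring
  have hshift := ((hasSum_nat_add_iff' 1).mpr (hasSum_catalanGF hs)).tsum_eq
  simp only [range_one, sum_singleton, catalan_zero, Nat.cast_one, zero_add, pow_one,
    one_mul] at hshift
  rw [sq, catalanGF, tsum_mul_tsum_eq_tsum_sum_antidiagonal_of_summable_norm hnorm hnorm,
    tsum_congr hconv, ← catalanGF, hshift]

theorem catalanGF_monotoneOn : MonotoneOn catalanGF (Set.Ico 0 (1 / 4)) := by
  intro s hs t ht hst
  exact hasSum_le (fun n => by gcongr; exact hs.1)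
    (hasSum_catalanGF (abs_lt.mpr ⟨by linarith [hs.1], hs.2⟩))
    (hasSum_catalanGF (abs_lt.mpr ⟨by linarith [ht.1], ht.2⟩))

theorem catalanGF_eq {s : ℝ} (hs : s ∈ Set.Ico 0 (1 / 4)) :
    catalanGF s = 1 / 2 - √(1 / 4 - s) :=
  eq_half_sub_sqrt_of_sq_eq_of_monotoneOn catalanGF_monotoneOn
    (fun u hu => catalanGF_sq (abs_lt.mpr ⟨by linarith [hu.1], hu.2⟩)) hs

/-- The generating function of the Catalan-type convolution sequence
`C 1 = 1`, `C N = ∑_{i=1}^{N-1} C i * C (N-i)` equals `1/2 - √(1/4 - s)` on `[0, 1/4)`. -/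
theorem catalan_generating_function
    (C : ℕ → ℝ) (hC1 : C 1 = 1)
    (hCrec : ∀ N : ℕ, 2 ≤ N → C N = ∑ i ∈ Finset.Ico 1 N, C i * C (N - i)) :
    ∀ s : ℝ, 0 ≤ s → s < 1 / 4 →
      HasSum (fun i : ℕ => C (i + 1) * s ^ (i + 1))
        (1 / 2 - Real.sqrt (1 / 4 - s)) := by
  intro s hs0 hs
  rw [← catalanGF_eq ⟨hs0, hs⟩]
  simpa only [eq_catalan_of_convolution C hC1 hCrec] using
    hasSum_catalanGF (abs_lt.mpr ⟨by linarith, hs⟩)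
end

section
/- Fix n ≥ 1 and set α = 1 + 2/n. Let r > 0 and define p_i = α^i, σ_i = 2^{-1-i}·(r/4), τ_{-1} = 3r/4, and τ_i = 3r/4 - ∑_{j=0}^i σ_j for i ≥ 0. Then τ_i → r/2 as i → ∞, and there exists a constant c = c(n) (independent of r) such that the infinite product ∏_{i=0}^∞ ( p_i/(1 + (r - τ_{i-1})²) + 1/σ_i² )^{1/p_i} is finite and bounded above by c(n)/r^{n+2}. -/
/-!
The `i`-th factor is comparable to `4^i / r^2` from both sides: `1/σ_i^2 = 64 · 4^i / r^2`,
`p_i ≤ 4^i`, and `r - τ_{i-1} ≥ r/4`. Taking logarithms, the product becomes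
`exp (∑ x^i log a_i)` with `x = 1/α = n/(n+2)`, and the geometric sums
`∑ x^i = (n+2)/2`, `∑ i x^i = n(n+2)/4` turn the bound `a_i ≤ (80/r^2) 4^i` into
`80^{(n+2)/2} 4^{n(n+2)/4} / r^{n+2}`.
-/

open Filter Real

theorem hasProd_rpow_of_hasSum_log_mul {ι : Type*} {a y : ι → ℝ} {s : ℝ}
    (ha : ∀ i, 0 < a i) (h : HasSum (fun i => log (a i) * y i) s) :
    HasProd (fun i => a i ^ y i) (exp s) := by
  simpa only [Function.comp_def, ← rpow_def_of_pos (ha _)] using h.rexp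

theorem summable_mul_geometric_of_abs_le {f : ℕ → ℝ} {C D x : ℝ} (hx0 : 0 ≤ x) (hx1 : x < 1)
    (hf : ∀ i, |f i| ≤ C + D * i) : Summable fun i => f i * x ^ i := by
  have hx : ‖x‖ < 1 := by rwa [norm_of_nonneg hx0]
  refine Summable.of_norm_bounded (g := fun i => C * x ^ i + D * (i * x ^ i))
    (((summable_geometric_of_lt_one hx0 hx1).mul_left C).add
      ((hasSum_coe_mul_geometric_of_norm_lt_one hx).summable.mul_left D)) fun i => ?_
  rw [norm_mul, norm_pow, norm_of_nonneg hx0, Real.norm_eq_abs]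
  calc |f i| * x ^ i ≤ (C + D * i) * x ^ i :=
        mul_le_mul_of_nonneg_right (hf i) (pow_nonneg hx0 i)
    _ = C * x ^ i + D * (i * x ^ i) := by ring

theorem log_mul_pow {c b : ℝ} (hc : 0 < c) (hb : 0 < b) (i : ℕ) :
    log (c * b ^ i) = log c + i * log b := by
  rw [log_mul hc.ne' (pow_pos hb i).ne', log_pow]

theorem multipliable_rpow_pow_and_tprod_le {a : ℕ → ℝ} {c₁ c₂ b x : ℝ} (hc₁ : 0 < c₁)
    (hb : 0 < b) (hx0 : 0 ≤ x) (hx1 : x < 1) (hlow : ∀ i, c₁ * b ^ i ≤ a i)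
    (hup : ∀ i, a i ≤ c₂ * b ^ i) :
    Multipliable (fun i => a i ^ x ^ i) ∧
      ∏' i, a i ^ x ^ i ≤ c₂ ^ (1 - x)⁻¹ * b ^ (x / (1 - x) ^ 2) := by
  have ha : ∀ i, 0 < a i := fun i => (mul_pos hc₁ (pow_pos hb i)).trans_le (hlow i)
  have hc₂ : 0 < c₂ := by simpa using (ha 0).trans_le (hup 0)
  have hlog_low : ∀ i, log c₁ + i * log b ≤ log (a i) := fun i => by
    rw [← log_mul_pow hc₁ hb]; exact log_le_log (mul_pos hc₁ (pow_pos hb i)) (hlow i)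
  have hlog_up : ∀ i, log (a i) ≤ log c₂ + i * log b := fun i => by
    rw [← log_mul_pow hc₂ hb]; exact log_le_log (ha i) (hup i)
  have hlog_abs : ∀ i, |log (a i)| ≤ (|log c₁| + |log c₂|) + |log b| * i := fun i => by
    have hi : (0 : ℝ) ≤ i := i.cast_nonneg
    have h₁ := mul_le_mul_of_nonneg_left (le_abs_self (log b)) hi
    have h₂ := mul_le_mul_of_nonneg_left (neg_abs_le (log b)) hi
    rw [abs_le]
    constructor <;> nlinarith [hlog_low i, hlog_up i, abs_nonneg (log c₁), abs_nonneg (log c₂),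
      neg_abs_le (log c₁), le_abs_self (log c₂)]
  obtain ⟨s, hs⟩ := summable_mul_geometric_of_abs_le hx0 hx1 hlog_abs
  have hprod := hasProd_rpow_of_hasSum_log_mul ha hs
  have hx : ‖x‖ < 1 := by rwa [norm_of_nonneg hx0]
  have hmajor : HasSum (fun i : ℕ => (log c₂ + i * log b) * x ^ i)
      (log c₂ * (1 - x)⁻¹ + log b * (x / (1 - x) ^ 2)) := by
    simpa only [add_mul, mul_assoc, mul_left_comm _ (log b)] using
      ((hasSum_geometric_of_lt_one hx0 hx1).mul_left (log c₂)).add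
        ((hasSum_coe_mul_geometric_of_norm_lt_one hx).mul_left (log b))
  refine ⟨hprod.multipliable, hprod.tprod_eq ▸ ?_⟩
  calc exp s ≤ exp (log c₂ * (1 - x)⁻¹ + log b * (x / (1 - x) ^ 2)) :=
        exp_le_exp.mpr <| hasSum_le (fun i =>
          mul_le_mul_of_nonneg_right (hlog_up i) (pow_nonneg hx0 i)) hs hmajor
    _ = c₂ ^ (1 - x)⁻¹ * b ^ (x / (1 - x) ^ 2) := by
        rw [exp_add, rpow_def_of_pos hc₂, rpow_def_of_pos hb]

theorem div_one_add_sq_le_div_sq {q d e : ℝ} (hq : 0 ≤ q) (he : 0 < e) (hed : e ≤ d) :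
    q / (1 + d ^ 2) ≤ q / e ^ 2 :=
  div_le_div_of_nonneg_left hq (by positivity) (by nlinarith)

section Radii

variable (r : ℝ)

theorem two_rpow_neg_one_sub_mul_div_four (i : ℕ) :
    (2 : ℝ) ^ (-(1 : ℝ) - i) * (r / 4) = r / 2 ^ (i + 3) := by
  rw [show -(1 : ℝ) - i = -((i + 1 : ℕ) : ℝ) by push_cast; ring, rpow_neg zero_le_two,
    rpow_natCast]
  field_simp
  ring

theorem three_quarters_sub_sum_range (i : ℕ) :
    3 * r / 4 - ∑ j ∈ Finset.range (i + 1), r / 2 ^ (j + 3) = r / 2 + r / 2 ^ (i + 3) := by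
  induction i with
  | zero => norm_num; ring
  | succ k ih =>
    rw [Finset.sum_range_succ, ← sub_sub, ih]
    field_simp
    ring

theorem tendsto_half_add_div_two_pow :
    Tendsto (fun i : ℕ => r / 2 + r / 2 ^ (i + 3)) atTop (nhds (r / 2)) := by
  have h : Tendsto (fun i : ℕ => r / 2 ^ (i + 3)) atTop (nhds 0) :=
    tendsto_const_nhds.div_atTop
      ((tendsto_pow_atTop_atTop_of_one_lt one_lt_two).comp (tendsto_add_atTop_nat 3))
  simpa using h.const_add (r / 2)

variable {r}

theorem quarter_le_sub_prev_radius (hr : 0 < r) (i : ℕ) :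
    r / 4 ≤ r - (if i = 0 then 3 * r / 4 else r / 2 + r / 2 ^ (i - 1 + 3)) := by
  rcases i with _ | k
  · norm_num; linarith
  · have : r / 2 ^ (k + 3) ≤ r / 4 :=
      div_le_div_of_nonneg_left hr.le (by norm_num) (by
        calc (4 : ℝ) = 2 ^ 2 := by norm_num
          _ ≤ 2 ^ (k + 3) := pow_le_pow_right₀ one_le_two (by omega))
    simp only [Nat.add_one_ne_zero, if_false, Nat.add_sub_cancel]
    linarith

theorem one_div_div_two_pow_sq (i : ℕ) : 1 / (r / 2 ^ (i + 3)) ^ 2 = 64 / r ^ 2 * 4 ^ i := by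
  rw [div_pow, one_div_div, ← pow_mul, show (4 : ℝ) = 2 ^ 2 by norm_num, ← pow_mul]
  ring

/-- Here `q = p_i`, `d = r - τ_{i-1}` and `r / 2 ^ (i + 3) = σ_i`. -/
theorem factor_mem_Icc (hr : 0 < r) {d q : ℝ} {i : ℕ} (hd : r / 4 ≤ d) (hq0 : 0 ≤ q)
    (hq : q ≤ 4 ^ i) :
    q / (1 + d ^ 2) + 1 / (r / 2 ^ (i + 3)) ^ 2 ∈
      Set.Icc (64 / r ^ 2 * 4 ^ i) (80 / r ^ 2 * 4 ^ i) := by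
  rw [one_div_div_two_pow_sq]
  have hfirst : q / (1 + d ^ 2) ≤ 16 / r ^ 2 * 4 ^ i :=
    calc q / (1 + d ^ 2) ≤ q / (r / 4) ^ 2 := div_one_add_sq_le_div_sq hq0 (by positivity) hd
      _ = 16 / r ^ 2 * q := by field_simp; ring
      _ ≤ 16 / r ^ 2 * 4 ^ i := by gcongr
  have hsum : 16 / r ^ 2 * (4 : ℝ) ^ i + 64 / r ^ 2 * 4 ^ i = 80 / r ^ 2 * 4 ^ i := by ring
  constructor <;> linarith [div_nonneg hq0 (by positivity : (0 : ℝ) ≤ 1 + d ^ 2)]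

end Radii

theorem one_sub_div_add_two_inv {m : ℝ} (hm : 0 ≤ m) : (1 - m / (m + 2))⁻¹ = (m + 2) / 2 := by
  field_simp
  ring

theorem div_add_two_div_one_sub_sq {m : ℝ} (hm : 0 ≤ m) :
    m / (m + 2) / (1 - m / (m + 2)) ^ 2 = m * (m + 2) / 4 := by
  field_simp
  ring

theorem div_sq_rpow_half {c r : ℝ} (hc : 0 ≤ c) (hr : 0 < r) (k : ℕ) :
    (c / r ^ 2) ^ ((k : ℝ) / 2) = c ^ ((k : ℝ) / 2) / r ^ k := by
  rw [div_rpow hc (by positivity), ← rpow_natCast_mul hr.le, Nat.cast_ofNat,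
    mul_div_cancel₀ _ two_ne_zero, rpow_natCast]

theorem one_add_two_div_le_four {n : ℕ} (hn : 1 ≤ n) : 1 + 2 / (n : ℝ) ≤ 4 := by
  have : (1 : ℝ) ≤ n := by exact_mod_cast hn
  have : 2 / (n : ℝ) ≤ 2 := div_le_self zero_le_two this
  linarith

theorem one_div_one_add_two_div_pow {n : ℕ} (hn : 1 ≤ n) (i : ℕ) :
    1 / (1 + 2 / (n : ℝ)) ^ i = ((n : ℝ) / (n + 2)) ^ i := by
  have : (0 : ℝ) < n := by exact_mod_cast hn
  rw [one_div, ← inv_pow]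
  congr 1
  field_simp

/-- The product estimate closing the Nash–Moser iteration: with `α = 1 + 2/n`,
`p_i = α^i`, `σ_i = 2^{-1-i}(r/4)`, `τ_{-1} = 3r/4`, `τ_i = 3r/4 - ∑_{j≤i} σ_j`,
one has `τ_i → r/2` and `∏_{i≥0} (p_i/(1+(r-τ_{i-1})²) + 1/σ_i²)^{1/p_i} ≤ c(n)/r^{n+2}`
with `c(n)` independent of `r`. -/
theorem nash_moser_product_estimate (n : ℕ) (hn : 1 ≤ n) :
    ∃ c : ℝ, 0 < c ∧ ∀ r : ℝ, 0 < r →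
      ∀ p σ τ : ℕ → ℝ,
        (∀ i : ℕ, p i = (1 + 2 / (n : ℝ)) ^ i) →
        (∀ i : ℕ, σ i = (2 : ℝ) ^ (-(1 : ℝ) - (i : ℝ)) * (r / 4)) →
        (∀ i : ℕ, τ i = 3 * r / 4 - ∑ j ∈ Finset.range (i + 1), σ j) →
        Tendsto τ atTop (nhds (r / 2)) ∧
        Multipliable (fun i : ℕ =>
          (p i / (1 + (r - (if i = 0 then 3 * r / 4 else τ (i - 1))) ^ 2)
            + 1 / (σ i) ^ 2) ^ (1 / p i)) ∧
        (∏' i : ℕ,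
          (p i / (1 + (r - (if i = 0 then 3 * r / 4 else τ (i - 1))) ^ 2)
            + 1 / (σ i) ^ 2) ^ (1 / p i))
          ≤ c / r ^ (n + 2) := by
  refine ⟨80 ^ (((n + 2 : ℕ) : ℝ) / 2) * 4 ^ ((n : ℝ) * (n + 2) / 4), by positivity, ?_⟩
  intro r hr p σ τ hp hσ hτ
  obtain rfl : σ = fun i => r / 2 ^ (i + 3) := funext fun i => by
    rw [hσ, two_rpow_neg_one_sub_mul_div_four]
  obtain rfl : τ = fun i => r / 2 + r / 2 ^ (i + 3) := funext fun i => by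
    rw [hτ, three_quarters_sub_sum_range]
  simp only [hp, one_div_one_add_two_div_pow hn]
  have hn0 : (0 : ℝ) ≤ n := n.cast_nonneg
  have hfactor := fun i => factor_mem_Icc hr (quarter_le_sub_prev_radius hr i) (by positivity)
    (pow_le_pow_left₀ (by positivity) (one_add_two_div_le_four hn) i)
  obtain ⟨hmult, hle⟩ := multipliable_rpow_pow_and_tprod_le (x := (n : ℝ) / (n + 2))
    (by positivity : 0 < 64 / r ^ 2) four_pos (by positivity)
    (by rw [div_lt_one (by positivity)]; linarith) (fun i => (hfactor i).1) (fun i => (hfactor i).2)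
  refine ⟨tendsto_half_add_div_two_pow r, hmult, hle.trans_eq ?_⟩
  rw [one_sub_div_add_two_inv hn0, div_add_two_div_one_sub_sq hn0,
    show (n : ℝ) + 2 = ((n + 2 : ℕ) : ℝ) by push_cast; ring, div_sq_rpow_half (by norm_num) hr]
  push_cast
  ring
end
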